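/- Let u : ℝ² → ℝ² be three times continuously differentiable with compact support and with div u = 0 everywhere. Then ∫_{ℝ²} [ (u·∇)Δu ](x) · u(x) dx + ∫_{ℝ²} Δu(x) · [ (u·∇)u ](x) dx = 0. -/

import Mathlib

/-
Write `(u·∇)F = Σₖ uₖ ∂ₖF` for the advective derivative. By the product rule the two integrands
add up to `Σᵢ (u·∇)(Δuᵢ uᵢ)`, and for divergence-free `u` one has `(u·∇)F = div (F u)`, whose
integral vanishes for compactly supported `F u`.
-/

open MeasureTheory

/-- Partial derivative in direction `i` of a scalar function on `ℝ²`. -/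
noncomputable def pd (i : Fin 2) (f : (Fin 2 → ℝ) → ℝ) (x : Fin 2 → ℝ) : ℝ :=
  fderiv ℝ f x (Pi.single i 1)

/-- Laplacian of a scalar function on `ℝ²`. -/
noncomputable def lap (f : (Fin 2 → ℝ) → ℝ) (x : Fin 2 → ℝ) : ℝ :=
  pd 0 (pd 0 f) x + pd 1 (pd 1 f) x

theorem integral_fderiv_apply_eq_zero {E G : Type*} [NormedAddCommGroup E] [NormedSpace ℝ E]
    [FiniteDimensional ℝ E] [MeasurableSpace E] [BorelSpace E] (μ : Measure E)
    [μ.IsAddHaarMeasure] [NormedAddCommGroup G] [NormedSpace ℝ G] {f : E → G}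
    (hf : ContDiff ℝ 1 f) (hc : HasCompactSupport f) (v : E) :
    ∫ x, fderiv ℝ f x v ∂μ = 0 := by
  have hdf : Continuous fun x => fderiv ℝ f x v :=
    (hf.continuous_fderiv one_ne_zero).clm_apply continuous_const
  have h := integral_smul_fderiv_eq_neg_fderiv_smul_of_integrable (μ := μ)
    (f := fun _ : E => (1 : ℝ)) (g := f) (v := v) (by simp)
    (by simpa using hdf.integrable_of_hasCompactSupport (hc.fderiv_apply ℝ v))
    (by simpa using hf.continuous.integrable_of_hasCompactSupport hc)
    (fun _ _ => differentiableAt_const _) (fun x _ => (hf.differentiable one_ne_zero) x)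
  simpa using h

lemma HasCompactSupport.apply {X ι : Type*} [TopologicalSpace X] {M : ι → Type*}
    [∀ i, Zero (M i)] {u : X → ∀ i, M i} (hu : HasCompactSupport u) (i : ι) :
    HasCompactSupport fun x => u x i :=
  hu.mono fun x hx h0 => hx (by simp [h0])

section PartialDerivatives

variable {f g : (Fin 2 → ℝ) → ℝ}

lemma contDiff_pd {n m : WithTop ℕ∞} (i : Fin 2) (hf : ContDiff ℝ n f) (hmn : m + 1 ≤ n) :
    ContDiff ℝ m (pd i f) :=
  (hf.fderiv_right hmn).clm_apply contDiff_const

lemma continuous_pd (i : Fin 2) (hf : ContDiff ℝ 1 f) : Continuous (pd i f) :=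
  (contDiff_pd (m := 0) i hf le_rfl).continuous

lemma hasCompactSupport_pd (i : Fin 2) (hf : HasCompactSupport f) :
    HasCompactSupport (pd i f) :=
  hf.fderiv_apply ℝ _

lemma pd_mul {x : Fin 2 → ℝ} (i : Fin 2) (hf : DifferentiableAt ℝ f x)
    (hg : DifferentiableAt ℝ g x) :
    pd i (fun y => f y * g y) x = pd i f x * g x + f x * pd i g x := by
  simp only [pd, fderiv_fun_mul hf hg, add_apply, smul_apply, smul_eq_mul]
  ring

lemma integral_pd_eq_zero (i : Fin 2) (hf : ContDiff ℝ 1 f) (hc : HasCompactSupport f) :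
    ∫ x, pd i f x = 0 :=
  integral_fderiv_apply_eq_zero volume hf hc _

lemma contDiff_lap {n : WithTop ℕ∞} (hf : ContDiff ℝ (n + 2) f) : ContDiff ℝ n (lap f) := by
  have h (i : Fin 2) : ContDiff ℝ n (pd i (pd i f)) :=
    contDiff_pd i (contDiff_pd (m := n + 1) i hf (by rw [add_assoc]; rfl)) le_rfl
  exact (h 0).add (h 1)

lemma hasCompactSupport_lap (hf : HasCompactSupport f) : HasCompactSupport (lap f) :=
  (hasCompactSupport_pd 0 (hasCompactSupport_pd 0 hf)).add
    (hasCompactSupport_pd 1 (hasCompactSupport_pd 1 hf))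

end PartialDerivatives

noncomputable def advectiveDeriv (u : (Fin 2 → ℝ) → (Fin 2 → ℝ)) (F : (Fin 2 → ℝ) → ℝ)
    (x : Fin 2 → ℝ) : ℝ :=
  ∑ k, u x k * pd k F x

section Advection

variable {u : (Fin 2 → ℝ) → (Fin 2 → ℝ)} {F G : (Fin 2 → ℝ) → ℝ}

lemma advectiveDeriv_mul {x : Fin 2 → ℝ} (hF : DifferentiableAt ℝ F x)
    (hG : DifferentiableAt ℝ G x) :
    advectiveDeriv u (fun y => F y * G y) x
      = advectiveDeriv u F x * G x + F x * advectiveDeriv u G x := by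
  simp only [advectiveDeriv, pd_mul _ hF hG, Fin.sum_univ_two]
  ring

lemma advectiveDeriv_eq_div_mul {x : Fin 2 → ℝ} (hu : Differentiable ℝ u)
    (hF : DifferentiableAt ℝ F x)
    (hdiv : pd 0 (fun y => u y 0) x + pd 1 (fun y => u y 1) x = 0) :
    advectiveDeriv u F x = pd 0 (fun y => u y 0 * F y) x + pd 1 (fun y => u y 1 * F y) x := by
  have hk (k : Fin 2) : DifferentiableAt ℝ (fun y => u y k) x := (differentiable_pi.mp hu k) x
  rw [advectiveDeriv, Fin.sum_univ_two, pd_mul 0 (hk 0) hF, pd_mul 1 (hk 1) hF]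
  linear_combination (-F x) * hdiv

lemma integral_advectiveDeriv_eq_zero (hu : ContDiff ℝ 1 u) (hc : HasCompactSupport u)
    (hdiv : ∀ x, pd 0 (fun y => u y 0) x + pd 1 (fun y => u y 1) x = 0)
    (hF : ContDiff ℝ 1 F) : ∫ x, advectiveDeriv u F x = 0 := by
  have hG (k : Fin 2) : ContDiff ℝ 1 (fun y => u y k * F y) := (contDiff_pi.mp hu k).mul hF
  have hcG (k : Fin 2) : HasCompactSupport (fun y => u y k * F y) :=
    (hc.apply k).mul_right
  have hint (k : Fin 2) : Integrable (pd k (fun y => u y k * F y)) :=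
    (continuous_pd k (hG k)).integrable_of_hasCompactSupport (hasCompactSupport_pd k (hcG k))
  have hdivF : advectiveDeriv u F
      = fun x => pd 0 (fun y => u y 0 * F y) x + pd 1 (fun y => u y 1 * F y) x :=
    funext fun x => advectiveDeriv_eq_div_mul (hu.differentiable one_ne_zero)
      (hF.differentiable one_ne_zero x) (hdiv x)
  rw [hdivF, integral_add (hint 0) (hint 1), integral_pd_eq_zero 0 (hG 0) (hcG 0),
    integral_pd_eq_zero 1 (hG 1) (hcG 1), add_zero]

lemma continuous_advectiveDeriv (hu : Continuous u) (hF : ContDiff ℝ 1 F) :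
    Continuous (advectiveDeriv u F) :=
  continuous_finsetSum _ fun k _ => ((continuous_apply k).comp hu).mul (continuous_pd k hF)

lemma hasCompactSupport_advectiveDeriv (hc : HasCompactSupport u) :
    HasCompactSupport (advectiveDeriv u F) :=
  hc.mono fun x hx h0 => hx (by simp [advectiveDeriv, h0])

lemma integrable_advectiveDeriv (hu : Continuous u) (hc : HasCompactSupport u)
    (hF : ContDiff ℝ 1 F) : Integrable (advectiveDeriv u F) :=
  (continuous_advectiveDeriv hu hF).integrable_of_hasCompactSupport
    (hasCompactSupport_advectiveDeriv hc)

end Advection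

/-- `∫ ((u·∇)Δu)·u + ∫ Δu·((u·∇)u) = 0` for a compactly supported,
divergence-free `C³` field `u`. -/
theorem highest_order_cancellation
    (u : (Fin 2 → ℝ) → (Fin 2 → ℝ))
    (hu : ContDiff ℝ 3 u) (hc : HasCompactSupport u)
    (hdiv : ∀ x, pd 0 (fun y => u y 0) x + pd 1 (fun y => u y 1) x = 0) :
    (∫ x : Fin 2 → ℝ,
        ∑ i, (∑ k, u x k * pd k (fun y => lap (fun z => u z i) y) x) * u x i)
    + (∫ x : Fin 2 → ℝ,
        ∑ i, lap (fun z => u z i) x * (∑ k, u x k * pd k (fun y => u y i) x)) = 0 := by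
  set U : Fin 2 → (Fin 2 → ℝ) → ℝ := fun i z => u z i
  change (∫ x, ∑ i, advectiveDeriv u (lap (U i)) x * U i x)
    + (∫ x, ∑ i, lap (U i) x * advectiveDeriv u (U i) x) = 0
  have hU (i : Fin 2) : ContDiff ℝ 3 (U i) := contDiff_pi.mp hu i
  have hU1 (i : Fin 2) : ContDiff ℝ 1 (U i) := (hU i).of_le (by norm_num)
  have hLU (i : Fin 2) : ContDiff ℝ 1 (lap (U i)) := contDiff_lap (hU i)
  have hA : Integrable fun x => ∑ i, advectiveDeriv u (lap (U i)) x * U i x :=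
    integrable_finsetSum _ fun i _ =>
      ((continuous_advectiveDeriv hu.continuous (hLU i)).mul
        (hU i).continuous).integrable_of_hasCompactSupport (hc.apply i).mul_left
  have hB : Integrable fun x => ∑ i, lap (U i) x * advectiveDeriv u (U i) x :=
    integrable_finsetSum _ fun i _ =>
      ((hLU i).continuous.mul (continuous_advectiveDeriv hu.continuous
        (hU1 i))).integrable_of_hasCompactSupport (hasCompactSupport_lap (hc.apply i)).mul_right
  calc _ = ∫ x, ∑ i, advectiveDeriv u (fun y => lap (U i) y * U i y) x := by
        rw [← integral_add hA hB]
        congr 1 with x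
        rw [← Finset.sum_add_distrib]
        exact Finset.sum_congr rfl fun i _ => (advectiveDeriv_mul
          ((hLU i).differentiable one_ne_zero x) ((hU1 i).differentiable one_ne_zero x)).symm
    _ = ∑ i, ∫ x, advectiveDeriv u (fun y => lap (U i) y * U i y) x :=
        integral_finsetSum _ fun i _ =>
          integrable_advectiveDeriv hu.continuous hc ((hLU i).mul (hU1 i))
    _ = 0 := Finset.sum_eq_zero fun i _ =>
        integral_advectiveDeriv_eq_zero (hu.of_le (by norm_num)) hc hdiv ((hLU i).mul (hU1 i))
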